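/- arXiv:2009.03634 — 5 statements merged into one kernel-verified Lean document; each statement's English description precedes it below -/
import Mathlib

section
/- Let m = 2. For every 1-lookahead equilibrium σ of the sequential scheduling game, the makespan satisfies max_i D_i(n) ≤ Σ_{j=1}^n p_j, i.e., the makespan of the equilibrium schedule is at most the sum over all jobs of their minimum processing times. -/
/-!
Sequential scheduling game on two unrelated machines, 1-lookahead players.
Machines are indexed by `Fin 2` (index `0` is machine 1, index `1` is machine 2),
jobs are `1, …, n`, and `p i j` is the processing time of job `j` on machine `i`.
-/

/-- `mload p σ i ℓ`: load of machine `i` after the first `ℓ` jobs under schedule `σ`. -/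
def mload (p : Fin 2 → ℕ → ℝ) (σ : ℕ → Fin 2) (i : Fin 2) (ℓ : ℕ) : ℝ :=
  ∑ j ∈ Finset.Icc 1 ℓ, if σ j = i then p i j else 0

/-- `Evec p σ j i i'`: the load vector `D(j-1)` with `p i j` added to coordinate `i`,
evaluated at coordinate `i'`. -/
def Evec (p : Fin 2 → ℕ → ℝ) (σ : ℕ → Fin 2) (j : ℕ) (i i' : Fin 2) : ℝ :=
  mload p σ i' (j - 1) + if i' = i then p i j else 0

/-- Anticipated cost of job `j` for choosing machine `i`, given predicted responses `r`. -/
def acost (p : Fin 2 → ℕ → ℝ) (σ : ℕ → Fin 2) (r : ℕ → Fin 2 → Fin 2) (j : ℕ) (i : Fin 2) :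
    ℝ :=
  Evec p σ j i i + if r j i = i then p i (j + 1) else 0

/-- `σ` is a 1-lookahead equilibrium for jobs `1, …, n` on two machines:
there are predicted responses `r j i` (an argmin of the follower's cost), each job
`j < n` minimizes its anticipated cost, and the last job `n` minimizes its actual cost. -/
def OneLookEq (n : ℕ) (p : Fin 2 → ℕ → ℝ) (σ : ℕ → Fin 2) : Prop :=
  ∃ r : ℕ → Fin 2 → Fin 2,
    (∀ j, 1 ≤ j → j < n →
      (∀ i i' : Fin 2,
        Evec p σ j i (r j i) + p (r j i) (j + 1) ≤ Evec p σ j i i' + p i' (j + 1)) ∧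
      (∀ i : Fin 2, acost p σ r j (σ j) ≤ acost p σ r j i)) ∧
    (1 ≤ n → ∀ i : Fin 2, mload p σ (σ n) (n - 1) + p (σ n) n ≤ mload p σ i (n - 1) + p i n)

/-!
Let `S ℓ` be the sum of the minimum processing times of jobs `1, …, ℓ`. Inductively, job `j` can be
placed on some machine `i₀` so that afterwards every load is at most `S j`. Placing job `j` there,
its anticipated cost is at most `S (j + 1)`: either the follower is predicted to go elsewhere, or
the predicted response is a best response, hence no worse than the follower's cheapest machine.
So the machine job `j` actually chooses has anticipated cost at most `S (j + 1)`, which bounds the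
new loads. If every load is even at most `S j`, job `j + 1` can go to its cheapest machine;
otherwise `i₀` was not chosen and job `j` predicts the follower on `i₀`, so job `j + 1` can go
to `i₀`. The last job minimizes its actual cost, which bounds the makespan by `S n`.
-/

open Finset

theorem exists_eq_min_fin_two {α : Type*} [LinearOrder α] (f : Fin 2 → α) :
    ∃ i, f i = min (f 0) (f 1) := by
  rcases min_choice (f 0) (f 1) with h | h
  exacts [⟨0, h.symm⟩, ⟨1, h.symm⟩]

def sumMinTime (p : Fin 2 → ℕ → ℝ) (ℓ : ℕ) : ℝ :=
  ∑ j ∈ Icc 1 ℓ, min (p 0 j) (p 1 j)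

theorem sumMinTime_succ (p : Fin 2 → ℕ → ℝ) (ℓ : ℕ) :
    sumMinTime p (ℓ + 1) = sumMinTime p ℓ + min (p 0 (ℓ + 1)) (p 1 (ℓ + 1)) :=
  sum_Icc_succ_top (by omega) _

def CanPlaceWithin (p : Fin 2 → ℕ → ℝ) (σ : ℕ → Fin 2) (j : ℕ) (M : ℝ) : Prop :=
  ∃ i, ∀ i', Evec p σ j i i' ≤ M

section

variable {p : Fin 2 → ℕ → ℝ} {σ : ℕ → Fin 2} {r : ℕ → Fin 2 → Fin 2} {i i' : Fin 2} {j : ℕ}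
  {M : ℝ}

theorem mload_zero : mload p σ i 0 = 0 := by
  simp [mload]

theorem mload_succ (ℓ : ℕ) :
    mload p σ i (ℓ + 1) = mload p σ i ℓ + if σ (ℓ + 1) = i then p i (ℓ + 1) else 0 :=
  sum_Icc_succ_top (by omega) _

theorem Evec_succ (ℓ : ℕ) :
    Evec p σ (ℓ + 1) i i' = mload p σ i' ℓ + if i' = i then p i (ℓ + 1) else 0 := by
  simp only [Evec, Nat.add_sub_cancel]

theorem Evec_of_ne (h : i' ≠ i) : Evec p σ j i i' = mload p σ i' (j - 1) := by
  simp [Evec, h]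

theorem mload_eq_Evec (hj : 1 ≤ j) : mload p σ i' j = Evec p σ j (σ j) i' := by
  obtain ⟨ℓ, rfl⟩ := Nat.exists_eq_add_of_le' hj
  rw [Evec_succ, mload_succ]
  by_cases h : σ (ℓ + 1) = i'
  · subst h; simp
  · simp [h, Ne.symm h]

theorem mload_le_Evec (hp : ∀ i j, 0 ≤ p i j) : mload p σ i' (j - 1) ≤ Evec p σ j i i' := by
  unfold Evec
  split_ifs <;> linarith [hp i j]

theorem Evec_le_acost (hp : ∀ i j, 0 ≤ p i j) : Evec p σ j i i ≤ acost p σ r j i := by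
  unfold acost
  split_ifs <;> linarith [hp i (j + 1)]

theorem acost_of_ne (h : r j i ≠ i) : acost p σ r j i = Evec p σ j i i := by
  simp [acost, h]

/-- When job `j + 1` is predicted to join machine `i`, that prediction is a best response, so it
costs no more than job `j + 1` on its cheapest machine. -/
theorem acost_le_add_min (hp : ∀ i j, 0 ≤ p i j)
    (hresp : ∀ i', Evec p σ j i (r j i) + p (r j i) (j + 1) ≤ Evec p σ j i i' + p i' (j + 1))
    (hM : ∀ i', Evec p σ j i i' ≤ M) :
    acost p σ r j i ≤ M + min (p 0 (j + 1)) (p 1 (j + 1)) := by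
  obtain ⟨w, hw⟩ : ∃ w, p w (j + 1) = min (p 0 (j + 1)) (p 1 (j + 1)) :=
    exists_eq_min_fin_two _
  have hq : 0 ≤ min (p 0 (j + 1)) (p 1 (j + 1)) := le_min (hp 0 _) (hp 1 _)
  unfold acost
  split_ifs with hr
  · have h := hresp w
    rw [hr] at h
    linarith [hM w]
  · linarith [hM i]

theorem canPlaceWithin_succ_of_le {w : Fin 2} (hload : ∀ i, mload p σ i j ≤ M)
    (hw : mload p σ w j + p w (j + 1) ≤ M) : CanPlaceWithin p σ (j + 1) M := by
  refine ⟨w, fun i => ?_⟩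
  rw [Evec_succ]
  split_ifs with h
  · exact h ▸ hw
  · simpa using hload i

theorem canPlaceWithin_one (hp : ∀ i j, 0 ≤ p i j) : CanPlaceWithin p σ 1 (sumMinTime p 1) := by
  obtain ⟨w, hw⟩ : ∃ w, p w 1 = min (p 0 1) (p 1 1) := exists_eq_min_fin_two _
  have h1 : sumMinTime p 1 = min (p 0 1) (p 1 1) := by simp [sumMinTime]
  refine canPlaceWithin_succ_of_le (w := w) (fun i => ?_) ?_ <;> rw [h1, mload_zero]
  · exact le_min (hp 0 1) (hp 1 1)
  · simpa using hw.le

theorem CanPlaceWithin.succ (hp : ∀ i j, 0 ≤ p i j) (hj : 1 ≤ j)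
    (hresp : ∀ i i', Evec p σ j i (r j i) + p (r j i) (j + 1) ≤ Evec p σ j i i' + p i' (j + 1))
    (hbest : ∀ i, acost p σ r j (σ j) ≤ acost p σ r j i) (h : CanPlaceWithin p σ j M) :
    CanPlaceWithin p σ (j + 1) (M + min (p 0 (j + 1)) (p 1 (j + 1))) := by
  obtain ⟨i₀, hi₀⟩ := h
  set q := min (p 0 (j + 1)) (p 1 (j + 1))
  have hq : 0 ≤ q := le_min (hp 0 _) (hp 1 _)
  have hacost₀ : acost p σ r j i₀ ≤ M + q := acost_le_add_min hp (hresp i₀) hi₀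
  have hchosen : mload p σ (σ j) j ≤ acost p σ r j i₀ := by
    rw [mload_eq_Evec hj]
    exact Evec_le_acost hp |>.trans (hbest i₀)
  have hother : ∀ i, i ≠ σ j → mload p σ i j ≤ M := fun i hi => by
    rw [mload_eq_Evec hj, Evec_of_ne hi]
    exact (mload_le_Evec hp).trans (hi₀ i)
  by_cases hfollow : r j i₀ = i₀ ∧ i₀ ≠ σ j
  · obtain ⟨hr, hne⟩ := hfollow
    refine canPlaceWithin_succ_of_le (w := i₀) (fun i => ?_) ?_
    · rcases eq_or_ne i (σ j) with rfl | hi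
      · linarith
      · linarith [hother i hi]
    · calc mload p σ i₀ j + p i₀ (j + 1) ≤ Evec p σ j i₀ i₀ + p i₀ (j + 1) := by
            rw [mload_eq_Evec hj, Evec_of_ne hne]
            gcongr
            exact mload_le_Evec hp
        _ = acost p σ r j i₀ := by simp [acost, hr]
        _ ≤ M + q := hacost₀
  · have hload : ∀ i, mload p σ i j ≤ M := by
      intro i
      rcases eq_or_ne i (σ j) with rfl | hi
      · rcases not_and_or.mp hfollow with hr | hsame
        · exact hchosen.trans ((acost_of_ne hr).le.trans (hi₀ i₀))
        · rw [mload_eq_Evec hj, ← not_ne_iff.mp hsame]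
          exact hi₀ i₀
      · exact hother i hi
    obtain ⟨w, hw⟩ : ∃ w, p w (j + 1) = q := exists_eq_min_fin_two _
    exact canPlaceWithin_succ_of_le (w := w) (fun i => by linarith [hload i])
      (by linarith [hload w])

theorem mload_le_of_canPlaceWithin (hp : ∀ i j, 0 ≤ p i j) {n : ℕ} (hn : 1 ≤ n)
    (hlast : ∀ i, mload p σ (σ n) (n - 1) + p (σ n) n ≤ mload p σ i (n - 1) + p i n)
    (h : CanPlaceWithin p σ n M) (i : Fin 2) : mload p σ i n ≤ M := by
  obtain ⟨w, hw⟩ := h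
  rw [mload_eq_Evec hn]
  rcases eq_or_ne i (σ n) with rfl | hi
  · have hww := hw w
    simp only [Evec, if_true] at hww ⊢
    linarith [hlast w]
  · rw [Evec_of_ne hi]
    exact (mload_le_Evec hp).trans (hw i)

end

/-- For `m = 2`, every 1-lookahead equilibrium has makespan at most the
sum over all jobs of their minimum processing times. -/
theorem makespan_le_sum_min_of_oneLookEq
    (n : ℕ) (p : Fin 2 → ℕ → ℝ) (hp : ∀ i j, 0 ≤ p i j)
    (σ : ℕ → Fin 2) (hσ : OneLookEq n p σ) :
    max (mload p σ 0 n) (mload p σ 1 n) ≤ ∑ j ∈ Finset.Icc 1 n, min (p 0 j) (p 1 j) := by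
  obtain ⟨r, hstep, hlast⟩ := hσ
  rcases Nat.eq_zero_or_pos n with rfl | hn
  · simp [mload]
  have hplace : ∀ j, 1 ≤ j → j ≤ n → CanPlaceWithin p σ j (sumMinTime p j) := by
    intro j hj
    induction j, hj using Nat.le_induction with
    | base => exact fun _ => canPlaceWithin_one hp
    | succ j hj ih =>
      intro hjn
      obtain ⟨hresp, hbest⟩ := hstep j hj (by omega)
      rw [sumMinTime_succ]
      exact (ih (by omega)).succ hp hj hresp hbest
  have hload := mload_le_of_canPlaceWithin hp hn (hlast hn) (hplace n hn le_rfl)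
  exact max_le (hload 0) (hload 1)
end

section
/- In the sequential scheduling game on m unrelated machines where players have k-lookahead, for every ℓ ∈ {1,…,n} it holds that ΔL([ℓ:n]) ≤ ΔL([ℓ+1:n]) + p_ℓ + ΔL(K_ℓ); that is, the maximum possible increase of the makespan caused by jobs ℓ,…,n (over all initial loads and all k-lookahead plays) is at most the corresponding quantity for jobs ℓ+1,…,n, plus the minimum processing time p_ℓ of job ℓ, plus the maximum possible increase of the makespan caused by the lookahead set K_ℓ of job ℓ playing alone. -/
/-!
Sequential scheduling game on `m` unrelated machines with `k`-lookahead players.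
Machines are indexed by `Fin m`, jobs by natural numbers (a block `[a:b]` of jobs plays
in the order `a, a+1, …, b`), and `p i j` is the processing time of job `j` on machine `i`.
-/

/-- Add the processing time of job `j` on machine `i` to the load vector `D`. -/
def bump {m : ℕ} (p : Fin m → ℕ → ℝ) (D : Fin m → ℝ) (i : Fin m) (j : ℕ) : Fin m → ℝ :=
  fun i' => D i' + if i' = i then p i j else 0

/-- `Out p D js F`: `F` is the final load vector of some backward-induction
(subgame-perfect, ties broken arbitrarily) play of the finite extensive game in which
the jobs in `js` choose machines in order, starting from loads `D`; the payoff of each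
job is the load, after all of these moves, of the machine it chose. -/
inductive Out {m : ℕ} (p : Fin m → ℕ → ℝ) : (Fin m → ℝ) → List ℕ → (Fin m → ℝ) → Prop
  | nil (D : Fin m → ℝ) : Out p D [] D
  | cons (D : Fin m → ℝ) (j : ℕ) (js : List ℕ) (i : Fin m) (cont : Fin m → Fin m → ℝ)
      (hcont : ∀ i', Out p (bump p D i' j) js (cont i'))
      (hopt : ∀ i', cont i i ≤ cont i' i') :
      Out p D (j :: js) (cont i)

/-- `i` is an optimal root move, for the root job `j` followed by the jobs `js`,
of the lookahead game starting from loads `D`, solved by backward induction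
(ties broken arbitrarily). -/
def RootMove {m : ℕ} (p : Fin m → ℕ → ℝ) (D : Fin m → ℝ) (j : ℕ) (js : List ℕ)
    (i : Fin m) : Prop :=
  ∃ cont : Fin m → Fin m → ℝ,
    (∀ i', Out p (bump p D i' j) js (cont i')) ∧ (∀ i', cont i i ≤ cont i' i')

/-- `Play p k D a b F`: starting from initial loads `D`, the block `[a:b]` of jobs plays a
`k`-lookahead play resulting in final loads `F`: the first remaining job `a` makes an
optimal root move of the lookahead game on jobs `a, a+1, …, min (a+k) b`, its processing
time is added to the chosen machine, and the remaining jobs continue. -/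
inductive Play {m : ℕ} (p : Fin m → ℕ → ℝ) (k : ℕ) :
    (Fin m → ℝ) → ℕ → ℕ → (Fin m → ℝ) → Prop
  | nil (D : Fin m → ℝ) (a b : ℕ) (h : b < a) : Play p k D a b D
  | cons (D : Fin m → ℝ) (a b : ℕ) (i : Fin m) (F : Fin m → ℝ) (hab : a ≤ b)
      (hroot : RootMove p D a (List.range' (a + 1) (min (a + k) b - a)) i)
      (hplay : Play p k (bump p D i a) (a + 1) b F) :
      Play p k D a b F

/-- Maximum load of a load vector. -/
noncomputable def maxLoad {m : ℕ} (D : Fin m → ℝ) : ℝ := ⨆ i, D i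

/-- `ΔL([a:b])`: the maximum possible increase of the makespan caused by the block
`[a:b]` of jobs, over all nonnegative initial loads and all `k`-lookahead plays. -/
noncomputable def deltaL {m : ℕ} (p : Fin m → ℕ → ℝ) (k a b : ℕ) : ℝ :=
  sSup {x | ∃ D F : Fin m → ℝ,
    (∀ i, 0 ≤ D i) ∧ Play p k D a b F ∧ x = maxLoad F - maxLoad D}

/-- Minimum processing time of job `j`. -/
noncomputable def pmin {m : ℕ} (p : Fin m → ℕ → ℝ) (j : ℕ) : ℝ := ⨅ i, p i j

/-!
When job `ℓ` moves to machine `i`, only machine `i` changes. By optimality of the root move,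
the load job `ℓ` ends up with on `i` after its lookahead game is at most the one it would get
by deviating to its fastest machine `i₀`; that deviation is followed by a play of `K_ℓ` from
loads of makespan at most `max D + p_ℓ`, which is a `k`-lookahead play of `K_ℓ` since every
window of it reaches the end of `K_ℓ`. Hence the makespan after job `ℓ` is at most
`max D + p_ℓ + ΔL(K_ℓ)`, and the jobs `ℓ+1, …, n` then add at most `ΔL([ℓ+1:n])`.
-/

open Finset

variable {m : ℕ} {p : Fin m → ℕ → ℝ}

lemma bump_self (D : Fin m → ℝ) (i : Fin m) (j : ℕ) : bump p D i j i = D i + p i j := by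
  simp [bump]

lemma le_bump (hp : ∀ i j, 0 ≤ p i j) (D : Fin m → ℝ) (i : Fin m) (j : ℕ) (i' : Fin m) :
    D i' ≤ bump p D i j i' := by
  unfold bump
  split_ifs <;> linarith [hp i j]

lemma bump_le_add (hp : ∀ i j, 0 ≤ p i j) (D : Fin m → ℝ) (i : Fin m) (j : ℕ) (i' : Fin m) :
    bump p D i j i' ≤ D i' + p i j := by
  unfold bump
  split_ifs <;> linarith [hp i j]

lemma le_maxLoad (D : Fin m → ℝ) (i : Fin m) : D i ≤ maxLoad D :=
  le_ciSup (Set.finite_range D).bddAbove i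

lemma maxLoad_mono {D F : Fin m → ℝ} (h : ∀ i, D i ≤ F i) : maxLoad D ≤ maxLoad F :=
  ciSup_mono (Set.finite_range F).bddAbove h

-- `0 ≤ c` covers `m = 0`, where both maximal loads are `sSup ∅ = 0`.
lemma maxLoad_le_maxLoad_add {D F : Fin m → ℝ} {c : ℝ} (hc : 0 ≤ c)
    (h : ∀ i, F i ≤ D i + c) : maxLoad F ≤ maxLoad D + c := by
  cases isEmpty_or_nonempty (Fin m)
  · simpa [maxLoad] using hc
  · exact ciSup_le fun i => (h i).trans (by linarith [le_maxLoad D i])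

lemma Out.le (hp : ∀ i j, 0 ≤ p i j) {D F : Fin m → ℝ} {js : List ℕ} (h : Out p D js F)
    (i : Fin m) : D i ≤ F i := by
  induction h with
  | nil => exact le_rfl
  | cons D j _ i' _ _ _ ih => exact (le_bump hp D i' j i).trans (ih i')

lemma Play.le (hp : ∀ i j, 0 ≤ p i j) {k a b : ℕ} {D F : Fin m → ℝ} (h : Play p k D a b F)
    (i : Fin m) : D i ≤ F i := by
  induction h with
  | nil => exact le_rfl
  | cons D a _ i' _ _ _ _ ih => exact (le_bump hp D i' a i).trans ih

lemma Play.le_add_sum (hp : ∀ i j, 0 ≤ p i j) {k a b : ℕ} {D F : Fin m → ℝ}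
    (h : Play p k D a b F) (i : Fin m) :
    F i ≤ D i + ∑ j ∈ Ico a (b + 1), ∑ i', p i' j := by
  induction h with
  | nil _ a b hba => simp [Ico_eq_empty_of_le (by omega : b + 1 ≤ a)]
  | cons D a b i' _ _ _ _ ih =>
    have hmove : p i' a ≤ ∑ i'', p i'' a := single_le_sum (fun i'' _ => hp i'' a) (mem_univ i')
    rw [sum_eq_sum_Ico_succ_bot (by omega : a < b + 1)]
    linarith [bump_le_add hp D i' a i]

-- With `b ≤ a + k` the lookahead window of every job reaches `b`, so each job's root game is
-- the remainder of the given one.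
theorem Play.of_out {k a b : ℕ} (hb : b ≤ a + k) {D F : Fin m → ℝ}
    (h : Out p D (List.range' a (b + 1 - a)) F) : Play p k D a b F := by
  induction hn : b + 1 - a generalizing a D F with
  | zero =>
    rw [hn] at h
    cases h
    exact Play.nil D a b (by omega)
  | succ n ih =>
    rw [hn, List.range'_succ] at h
    cases h with
    | cons _ _ _ i cont hcont hopt =>
      have hwindow : min (a + k) b - a = n := by omega
      refine Play.cons D a b i (cont i) (by omega) ⟨cont, ?_, hopt⟩ (ih (by omega) ?_ (by omega))
      · simpa only [hwindow] using hcont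
      · rw [show b + 1 - (a + 1) = n by omega]
        exact hcont i

lemma RootMove.exists_out_le (hp : ∀ i j, 0 ≤ p i j) {D : Fin m → ℝ} {j : ℕ} {js : List ℕ}
    {i : Fin m} (h : RootMove p D j js i) (i' : Fin m) :
    ∃ F, Out p (bump p D i' j) js F ∧ D i + p i j ≤ F i' := by
  obtain ⟨cont, hcont, hopt⟩ := h
  exact ⟨cont i', hcont i', bump_self (p := p) D i j ▸ ((hcont i).le hp i).trans (hopt i')⟩

lemma le_deltaL (hp : ∀ i j, 0 ≤ p i j) {k a b : ℕ} {D F : Fin m → ℝ} (hD : ∀ i, 0 ≤ D i)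
    (h : Play p k D a b F) : maxLoad F - maxLoad D ≤ deltaL p k a b := by
  have hwork : 0 ≤ ∑ j ∈ Ico a (b + 1), ∑ i, p i j :=
    sum_nonneg fun j _ => sum_nonneg fun i _ => hp i j
  refine le_csSup ⟨∑ j ∈ Ico a (b + 1), ∑ i, p i j, ?_⟩ ⟨D, F, hD, h, rfl⟩
  rintro _ ⟨D', F', -, h', rfl⟩
  linarith [maxLoad_le_maxLoad_add hwork (h'.le_add_sum hp)]

lemma deltaL_nonneg (hp : ∀ i j, 0 ≤ p i j) (k a b : ℕ) : 0 ≤ deltaL p k a b :=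
  Real.sSup_nonneg fun _ ⟨_, _, _, h, hx⟩ => hx ▸ sub_nonneg.2 (maxLoad_mono (h.le hp))

lemma pmin_nonneg (hp : ∀ i j, 0 ≤ p i j) (j : ℕ) : 0 ≤ pmin p j :=
  Real.iInf_nonneg fun i => hp i j

theorem maxLoad_bump_le_of_rootMove (hp : ∀ i j, 0 ≤ p i j) {k ℓ b : ℕ} (hb : b ≤ ℓ + k)
    {D : Fin m → ℝ} (hD : ∀ i, 0 ≤ D i) {i : Fin m}
    (hroot : RootMove p D ℓ (List.range' (ℓ + 1) (b - ℓ)) i) :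
    maxLoad (bump p D i ℓ) ≤ maxLoad D + (pmin p ℓ + deltaL p k (ℓ + 1) b) := by
  have : Nonempty (Fin m) := ⟨i⟩
  obtain ⟨i₀, hi₀⟩ := Finite.exists_min (fun i' => p i' ℓ)
  have hpmin : pmin p ℓ = p i₀ ℓ := le_antisymm (ciInf_le (Set.finite_range _).bddBelow i₀)
    (le_ciInf hi₀)
  obtain ⟨F, hout, hown⟩ := hroot.exists_out_le hp i₀
  have hplay : Play p k (bump p D i₀ ℓ) (ℓ + 1) b F :=
    Play.of_out (by omega) (Nat.add_sub_add_right b 1 ℓ ▸ hout)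
  have hK := le_deltaL hp (fun i' => (hD i').trans (le_bump hp D i₀ ℓ i')) hplay
  have hi₀move := maxLoad_le_maxLoad_add (hp i₀ ℓ) (bump_le_add hp D i₀ ℓ)
  refine ciSup_le fun i' => ?_
  by_cases hi' : i' = i
  · subst hi'
    rw [bump_self]
    linarith [le_maxLoad F i₀]
  · simp only [bump, hi', if_false, add_zero]
    linarith [le_maxLoad D i', pmin_nonneg hp ℓ, deltaL_nonneg hp k (ℓ + 1) b]

theorem deltaL_succ_add_general (m k n : ℕ) (p : Fin m → ℕ → ℝ)
    (hp : ∀ i j, 0 ≤ p i j) (ℓ : ℕ) :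
    deltaL p k ℓ n ≤ deltaL p k (ℓ + 1) n + pmin p ℓ + deltaL p k (ℓ + 1) (min (ℓ + k) n) := by
  have hΔrest := deltaL_nonneg hp k (ℓ + 1) n
  have hpmin := pmin_nonneg hp ℓ
  have hΔK := deltaL_nonneg hp k (ℓ + 1) (min (ℓ + k) n)
  refine Real.sSup_le ?_ (by linarith)
  rintro _ ⟨D, F, hD, hplay, rfl⟩
  cases hplay with
  | nil => linarith
  | cons _ _ _ i F _ hroot hrest =>
    have hfirst := maxLoad_bump_le_of_rootMove hp (min_le_left _ _) hD hroot
    have hlater := le_deltaL hp (fun i' => (hD i').trans (le_bump hp D i ℓ i')) hrest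
    linarith

/-- For jobs `1, …, n` with `k`-lookahead, for every `ℓ ∈ {1, …, n}`,
`ΔL([ℓ:n]) ≤ ΔL([ℓ+1:n]) + p_ℓ + ΔL(K_ℓ)`, where `K_ℓ = [ℓ+1 : min (ℓ+k) n]` is the
lookahead set of job `ℓ` and `p_ℓ` its minimum processing time. -/
theorem deltaL_succ_add (m k n : ℕ) (hm : 0 < m) (p : Fin m → ℕ → ℝ)
    (hp : ∀ i j, 0 ≤ p i j) (ℓ : ℕ) (hℓ1 : 1 ≤ ℓ) (hℓ2 : ℓ ≤ n) :
    deltaL p k ℓ n ≤ deltaL p k (ℓ + 1) n + pmin p ℓ + deltaL p k (ℓ + 1) (min (ℓ + k) n) :=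
  deltaL_succ_add_general m k n p hp ℓ
end

section
/- Let m ≥ 2, n = m, let 0 < ε < 1/2 and let B ≥ m + 2. Consider the instance with processing times: p_{1,j} = 1 − ε for every job j; p_{j,j} = 1 for every job j ∈ {2,…,m}; p_{j+1,j} = m + 1 − j − (m + 2 − j)ε for every job j ∈ {1,…,m−1}; and p_{i,j} = B for all remaining pairs (i,j). Then every simple-minded equilibrium σ satisfies σ_j = j + 1 for j ∈ {1,…,m−1} and σ_m = 1, and has makespan m − (m+1)ε, while the schedule assigning each job j to machine j shows OPT ≤ 1. Consequently, for every c < m there is an instance on m machines whose simple-minded equilibrium has makespan greater than c·OPT (the sequential price of anarchy for simple-minded players is at least m). -/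
/-!
Sequential scheduling game on `m` unrelated machines with simple-minded players.
Here both machines and jobs are indexed by natural numbers: machines are `1, …, m`
and jobs are `1, …, n`; `p i j` is the processing time of job `j` on machine `i`.
-/

/-- `loadN p σ i ℓ`: load of machine `i` after the first `ℓ` jobs under schedule `σ`. -/
def loadN (p : ℕ → ℕ → ℝ) (σ : ℕ → ℕ) (i ℓ : ℕ) : ℝ :=
  ∑ j ∈ Finset.Icc 1 ℓ, if σ j = i then p i j else 0

/-- `μ` is a selection assigning to each job `j ∈ {1, …, n}` a machine in `{1, …, m}` on
which its processing time is minimal (so that `p (μ j) j = p_j`). -/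
def MinSelN (m n : ℕ) (p : ℕ → ℕ → ℝ) (μ : ℕ → ℕ) : Prop :=
  ∀ j ∈ Finset.Icc 1 n, μ j ∈ Finset.Icc 1 m ∧ ∀ i ∈ Finset.Icc 1 m, p (μ j) j ≤ p i j

/-- Anticipated cost, for a simple-minded job `j`, of choosing machine `i`:
the current load of machine `i`, plus `p i j`, plus the minimum processing times of
all later jobs that `j` assumes (via the selection `μ`) will choose machine `i`. -/
def smCostN (n : ℕ) (p : ℕ → ℕ → ℝ) (μ σ : ℕ → ℕ) (j i : ℕ) : ℝ :=
  loadN p σ i (j - 1) + p i j +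
    ∑ j' ∈ Finset.Icc (j + 1) n, if μ j' = i then p (μ j') j' else 0

/-- `σ` is a simple-minded equilibrium: every job `j ∈ {1, …, n}` chooses a machine in
`{1, …, m}` minimizing its anticipated cost. -/
def SMEqN (m n : ℕ) (p : ℕ → ℕ → ℝ) (μ σ : ℕ → ℕ) : Prop :=
  ∀ j ∈ Finset.Icc 1 n, σ j ∈ Finset.Icc 1 m ∧
    ∀ i ∈ Finset.Icc 1 m, smCostN n p μ σ j (σ j) ≤ smCostN n p μ σ j i

/-- Makespan of a schedule `τ` of jobs `1, …, n` on machines `1, …, m`. -/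
noncomputable def makespanN (m n : ℕ) (p : ℕ → ℕ → ℝ) (τ : ℕ → ℕ) : ℝ :=
  sSup {x | ∃ i ∈ Finset.Icc 1 m, x = loadN p τ i n}

/-- Optimal (minimum) makespan over all schedules of jobs `1, …, n` on machines
`1, …, m`. -/
noncomputable def OPTN (m n : ℕ) (p : ℕ → ℕ → ℝ) : ℝ :=
  sInf {x | ∃ τ : ℕ → ℕ, (∀ j ∈ Finset.Icc 1 n, τ j ∈ Finset.Icc 1 m) ∧
    x = makespanN m n p τ}

/-!
Machine `1` is the unique fastest machine for every job, so the selection `μ` sends every job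
there and each job expects all later jobs to pile up on machine `1`. If jobs `1, …, j - 1` sit
on machines `2, …, j`, job `j < m` would thus pay `(m + 1 - j)(1 - ε)` on machine `1`,
`p (j+1) j + 2 - ε` on machine `j`, at least `B` elsewhere, but only
`p (j+1) j = (m + 1 - j)(1 - ε) - ε` on the empty machine `j + 1`; the last job finds machine `1`
empty. So the equilibrium is unique, and its makespan is the load `p 2 1 = m - (m + 1)ε` of
machine `2`, while the diagonal schedule has makespan `1`. Letting `ε → 0` gives the bound on
the price of anarchy.
-/

open Finset

section General

variable {m n : ℕ} {p : ℕ → ℕ → ℝ} {μ σ τ : ℕ → ℕ}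

theorem loadN_congr {i ℓ : ℕ} (h : ∀ j ∈ Icc 1 ℓ, σ j = τ j) :
    loadN p σ i ℓ = loadN p τ i ℓ :=
  sum_congr rfl fun j hj => by rw [h j hj]

theorem loadN_nonneg {i ℓ : ℕ} (hp : ∀ j ∈ Icc 1 ℓ, 0 ≤ p i j) : 0 ≤ loadN p σ i ℓ :=
  sum_nonneg fun j hj => by split_ifs <;> simp [hp j hj]

theorem loadN_eq_zero {i ℓ : ℕ} (h : ∀ j ∈ Icc 1 ℓ, σ j ≠ i) : loadN p σ i ℓ = 0 :=
  sum_eq_zero fun j hj => if_neg (h j hj)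

theorem loadN_eq_of_unique {i j ℓ : ℕ} (hj : j ∈ Icc 1 ℓ) (hσj : σ j = i)
    (huniq : ∀ j' ∈ Icc 1 ℓ, σ j' = i → j' = j) : loadN p σ i ℓ = p i j := by
  rw [loadN, sum_eq_single_of_mem j hj fun j' hj' hne => if_neg fun h => hne (huniq j' hj' h),
    if_pos hσj]

theorem smCostN_congr {j i : ℕ} (h : ∀ j' ∈ Icc 1 (j - 1), σ j' = τ j') :
    smCostN n p μ σ j i = smCostN n p μ τ j i := by
  rw [smCostN, smCostN, loadN_congr h]

theorem makespanN_congr (h : ∀ j ∈ Icc 1 n, σ j = τ j) :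
    makespanN m n p σ = makespanN m n p τ := by
  simp only [makespanN, loadN_congr h]

theorem makespanN_eq_of_forall_le {i₀ : ℕ} (hi₀ : i₀ ∈ Icc 1 m)
    (hmax : ∀ i ∈ Icc 1 m, loadN p τ i n ≤ loadN p τ i₀ n) :
    makespanN m n p τ = loadN p τ i₀ n :=
  IsGreatest.csSup_eq ⟨⟨i₀, hi₀, rfl⟩, by rintro _ ⟨i, hi, rfl⟩; exact hmax i hi⟩

theorem makespanN_nonneg (hp : ∀ i ∈ Icc 1 m, ∀ j ∈ Icc 1 n, 0 ≤ p i j) :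
    0 ≤ makespanN m n p τ :=
  Real.sSup_nonneg <| by rintro _ ⟨i, hi, rfl⟩; exact loadN_nonneg (hp i hi)

theorem optN_nonneg (hp : ∀ i ∈ Icc 1 m, ∀ j ∈ Icc 1 n, 0 ≤ p i j) : 0 ≤ OPTN m n p :=
  Real.sInf_nonneg <| by rintro _ ⟨τ, -, rfl⟩; exact makespanN_nonneg hp

theorem optN_le_makespanN (hp : ∀ i ∈ Icc 1 m, ∀ j ∈ Icc 1 n, 0 ≤ p i j)
    (hτ : ∀ j ∈ Icc 1 n, τ j ∈ Icc 1 m) : OPTN m n p ≤ makespanN m n p τ :=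
  csInf_le ⟨0, by rintro _ ⟨τ, -, rfl⟩; exact makespanN_nonneg hp⟩ ⟨τ, hτ, rfl⟩

theorem smEqN_iff_eqOn (hτ : ∀ j ∈ Icc 1 n, τ j ∈ Icc 1 m)
    (hbest : ∀ j ∈ Icc 1 n, ∀ i ∈ Icc 1 m, i ≠ τ j →
      smCostN n p μ τ j (τ j) < smCostN n p μ τ j i) :
    SMEqN m n p μ σ ↔ ∀ j ∈ Icc 1 n, σ j = τ j := by
  constructor
  · intro hσ j
    induction j using Nat.strong_induction_on with
    | _ j ih =>
      intro hj
      have hprev : ∀ j' ∈ Icc 1 (j - 1), σ j' = τ j' := fun j' hj' =>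
        ih j' (by grind) (by grind)
      obtain ⟨hσj, hmin⟩ := hσ j hj
      by_contra hne
      have hle := hmin (τ j) (hτ j hj)
      rw [smCostN_congr hprev, smCostN_congr hprev] at hle
      exact (hbest j hj (σ j) hσj hne).not_ge hle
  · intro heq j hj
    have hprev : ∀ j' ∈ Icc 1 (j - 1), σ j' = τ j' := fun j' hj' =>
      heq j' (by grind)
    refine ⟨heq j hj ▸ hτ j hj, fun i hi => ?_⟩
    rw [heq j hj, smCostN_congr hprev, smCostN_congr hprev]
    rcases eq_or_ne i (τ j) with rfl | hne
    · exact le_rfl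
    · exact (hbest j hj i hi hne).le

end General

structure IsSMLowerBoundInstance (m : ℕ) (ε B : ℝ) (p : ℕ → ℕ → ℝ) : Prop where
  two_le : 2 ≤ m
  ε_pos : 0 < ε
  ε_lt_half : ε < 1 / 2
  le_B : (m : ℝ) + 2 ≤ B
  time_one : ∀ j ∈ Icc 1 m, p 1 j = 1 - ε
  time_self : ∀ j ∈ Icc 2 m, p j j = 1
  time_succ : ∀ j ∈ Icc 1 (m - 1), p (j + 1) j = (m : ℝ) + 1 - j - ((m : ℝ) + 2 - j) * ε
  time_other : ∀ i ∈ Icc 1 m, ∀ j ∈ Icc 1 m, i ≠ 1 → i ≠ j → i ≠ j + 1 → p i j = B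

def shiftSchedule (m j : ℕ) : ℕ := if j = m then 1 else j + 1

section ShiftSchedule

variable {m : ℕ} {p : ℕ → ℕ → ℝ}

theorem shiftSchedule_mem {j : ℕ} (hj : j ∈ Icc 1 m) :
    shiftSchedule m j ∈ Icc 1 m := by
  unfold shiftSchedule; split_ifs <;> grind

theorem loadN_shiftSchedule_eq_zero {i ℓ : ℕ} (hℓ : ℓ < m) (hi : i ∉ Icc 2 (ℓ + 1)) :
    loadN p (shiftSchedule m) i ℓ = 0 :=
  loadN_eq_zero fun j hj => by unfold shiftSchedule; split_ifs <;> grind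

theorem loadN_shiftSchedule_eq {i ℓ : ℕ} (hi : i ∈ Icc 2 (ℓ + 1)) (him : i ≤ m) :
    loadN p (shiftSchedule m) i ℓ = p i (i - 1) :=
  loadN_eq_of_unique (by grind) (by unfold shiftSchedule; split_ifs <;> grind)
    fun j _ => by unfold shiftSchedule; split_ifs <;> grind

theorem loadN_shiftSchedule_one (hm : 1 ≤ m) : loadN p (shiftSchedule m) 1 m = p 1 m :=
  loadN_eq_of_unique (by grind) (by simp [shiftSchedule])
    fun j _ => by unfold shiftSchedule; split_ifs <;> grind

end ShiftSchedule

namespace IsSMLowerBoundInstance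

variable {m : ℕ} {ε B : ℝ} {p : ℕ → ℕ → ℝ}

theorem time_succ_eq (h : IsSMLowerBoundInstance m ε B p) {j : ℕ} (hj : j ∈ Icc 1 (m - 1)) :
    p (j + 1) j = ((m : ℝ) + 1 - j) * (1 - ε) - ε := by
  rw [h.time_succ j hj]; ring

theorem one_sub_lt_time_succ (h : IsSMLowerBoundInstance m ε B p) {j : ℕ}
    (hj : j ∈ Icc 1 (m - 1)) : 1 - ε < p (j + 1) j := by
  have hjm : (j : ℝ) + 1 ≤ m := by norm_cast; grind
  rw [h.time_succ_eq hj]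
  nlinarith [h.ε_pos, h.ε_lt_half]

theorem time_succ_le_time_two_one (h : IsSMLowerBoundInstance m ε B p) {j : ℕ}
    (hj : j ∈ Icc 1 (m - 1)) : p (j + 1) j ≤ p 2 1 := by
  have hj1 : (1 : ℝ) ≤ j := by norm_cast; grind
  rw [h.time_succ_eq hj, h.time_succ_eq (by grind [h.two_le]), Nat.cast_one]
  nlinarith [mul_nonneg (sub_nonneg.2 hj1) (by linarith [h.ε_lt_half] : (0 : ℝ) ≤ 1 - ε)]

theorem time_one_lt (h : IsSMLowerBoundInstance m ε B p) {i j : ℕ} (hi : i ∈ Icc 1 m)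
    (hi1 : i ≠ 1) (hj : j ∈ Icc 1 m) : p 1 j < p i j := by
  have hm : (2 : ℝ) ≤ m := by exact_mod_cast h.two_le
  rw [h.time_one j hj]
  by_cases hij : i = j
  · subst hij; rw [h.time_self i (by grind)]; linarith [h.ε_pos]
  by_cases hij1 : i = j + 1
  · subst hij1; exact h.one_sub_lt_time_succ (by grind)
  · rw [h.time_other i hi j hj hi1 hij hij1]; linarith [h.le_B, h.ε_pos]

theorem nonneg (h : IsSMLowerBoundInstance m ε B p) :
    ∀ i ∈ Icc 1 m, ∀ j ∈ Icc 1 m, 0 ≤ p i j := by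
  intro i hi j hj
  have h1 : 0 ≤ p 1 j := by rw [h.time_one j hj]; linarith [h.ε_lt_half]
  rcases eq_or_ne i 1 with rfl | hi1
  · exact h1
  · exact h1.trans (h.time_one_lt hi hi1 hj).le

theorem eq_one_of_minSelN (h : IsSMLowerBoundInstance m ε B p) {μ : ℕ → ℕ}
    (hμ : MinSelN m m p μ) : ∀ j ∈ Icc 1 m, μ j = 1 := by
  intro j hj
  obtain ⟨hμj, hmin⟩ := hμ j hj
  by_contra hne
  exact (h.time_one_lt hμj hne hj).not_ge (hmin 1 (by grind [h.two_le]))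

theorem minSelN_one (h : IsSMLowerBoundInstance m ε B p) : MinSelN m m p fun _ => 1 := by
  intro j hj
  refine ⟨by grind [h.two_le], fun i hi => ?_⟩
  rcases eq_or_ne i 1 with rfl | hi1
  · exact le_rfl
  · exact (h.time_one_lt hi hi1 hj).le

theorem smCostN_eq (h : IsSMLowerBoundInstance m ε B p) {μ : ℕ → ℕ}
    (hμ : ∀ j ∈ Icc 1 m, μ j = 1) (σ : ℕ → ℕ) {j : ℕ} (hj : j ≤ m) (i : ℕ) :
    smCostN m p μ σ j i =
      loadN p σ i (j - 1) + p i j + if i = 1 then ((m : ℝ) - j) * (1 - ε) else 0 := by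
  rw [smCostN]
  congr 1
  split_ifs with hi
  · subst hi
    rw [sum_congr rfl fun j' hj' => by rw [hμ j' (by grind), if_pos rfl, h.time_one j' (by grind)],
      sum_const, Nat.card_Icc, nsmul_eq_mul, Nat.cast_sub (by omega)]
    push_cast; ring
  · exact sum_eq_zero fun j' hj' => by rw [hμ j' (by grind), if_neg (Ne.symm hi)]

end IsSMLowerBoundInstance

namespace IsSMLowerBoundInstance

variable {m : ℕ} {ε B : ℝ} {p : ℕ → ℕ → ℝ}

theorem smCostN_shiftSchedule_lt (h : IsSMLowerBoundInstance m ε B p) {μ : ℕ → ℕ}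
    (hμ : ∀ j ∈ Icc 1 m, μ j = 1) {j i : ℕ} (hj : j ∈ Icc 1 m) (hi : i ∈ Icc 1 m)
    (hne : i ≠ shiftSchedule m j) :
    smCostN m p μ (shiftSchedule m) j (shiftSchedule m j) <
      smCostN m p μ (shiftSchedule m) j i := by
  have hm := h.two_le
  have hload : 0 ≤ loadN p (shiftSchedule m) i (j - 1) :=
    loadN_nonneg fun j' hj' => h.nonneg i hi j' (by grind)
  simp only [h.smCostN_eq hμ _ (mem_Icc.1 hj).2]
  rcases eq_or_ne j m with rfl | hjm
  · rw [shiftSchedule, if_pos rfl] at hne ⊢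
    rw [loadN_shiftSchedule_eq_zero (by grind) (by grind), if_pos rfl, if_neg hne, sub_self,
      zero_mul]
    linarith [h.time_one_lt hi hne hj]
  rw [shiftSchedule, if_neg hjm] at hne ⊢
  rw [loadN_shiftSchedule_eq_zero (by grind) (by grind), if_neg (by grind),
    h.time_succ_eq (by grind)]
  rcases eq_or_ne i 1 with rfl | hi1
  · rw [loadN_shiftSchedule_eq_zero (by grind) (by grind), if_pos rfl, h.time_one j hj]
    linarith [h.ε_pos]
  rw [if_neg hi1]
  rcases eq_or_ne i j with rfl | hij
  · have hprev := h.time_succ_eq (j := i - 1) (by grind)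
    rw [Nat.sub_add_cancel (by grind), Nat.cast_sub (by grind)] at hprev
    rw [loadN_shiftSchedule_eq (by grind) (by grind), h.time_self i (by grind), hprev]
    push_cast
    linarith [h.ε_lt_half]
  · have hjm : (j : ℝ) + 1 ≤ m := by norm_cast; grind
    rw [h.time_other i hi j hj hi1 hij hne]
    nlinarith [h.le_B, mul_nonneg (by linarith : (0 : ℝ) ≤ m + 1 - j) h.ε_pos.le]

theorem smEqN_iff (h : IsSMLowerBoundInstance m ε B p) {μ σ : ℕ → ℕ} (hμ : MinSelN m m p μ) :
    SMEqN m m p μ σ ↔ ∀ j ∈ Icc 1 m, σ j = shiftSchedule m j :=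
  smEqN_iff_eqOn (fun _ hj => shiftSchedule_mem hj)
    fun _ hj _ hi hne => h.smCostN_shiftSchedule_lt (h.eq_one_of_minSelN hμ) hj hi hne

theorem makespanN_shiftSchedule (h : IsSMLowerBoundInstance m ε B p) :
    makespanN m m p (shiftSchedule m) = m - (m + 1) * ε := by
  have hm := h.two_le
  have hload : ∀ i ∈ Icc 2 m, loadN p (shiftSchedule m) i m = p i (i - 1) := fun i hi =>
    loadN_shiftSchedule_eq (by grind) (by grind)
  rw [makespanN_eq_of_forall_le (i₀ := 2) (by grind), hload 2 (by grind),
    h.time_succ 1 (by grind)]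
  · push_cast; ring
  intro i hi
  rw [hload 2 (by grind)]
  rcases eq_or_ne i 1 with rfl | hi1
  · rw [loadN_shiftSchedule_one (by grind), h.time_one m (by grind)]
    exact (h.one_sub_lt_time_succ (j := 1) (by grind)).le
  · have hsucc := h.time_succ_le_time_two_one (j := i - 1) (by grind)
    rwa [Nat.sub_add_cancel (by grind), ← hload i (by grind)] at hsucc

theorem makespanN_id (h : IsSMLowerBoundInstance m ε B p) : makespanN m m p id = 1 := by
  have hm := h.two_le
  have hload : ∀ i ∈ Icc 1 m, loadN p id i m = p i i := fun i hi =>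
    loadN_eq_of_unique hi rfl fun _ _ => id
  rw [makespanN_eq_of_forall_le (i₀ := 2) (by grind), hload 2 (by grind), h.time_self 2 (by grind)]
  intro i hi
  rw [hload i hi, hload 2 (by grind), h.time_self 2 (by grind)]
  rcases eq_or_ne i 1 with rfl | hi1
  · rw [h.time_one 1 hi]; linarith [h.ε_pos]
  · rw [h.time_self i (by grind)]

theorem optN_le_one (h : IsSMLowerBoundInstance m ε B p) : OPTN m m p ≤ 1 :=
  h.makespanN_id ▸ optN_le_makespanN h.nonneg fun _ hj => hj

end IsSMLowerBoundInstance

-- The clause `j < m` keeps the times nonnegative outside the `m × m` block as well.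
def lowerBoundTimes (m : ℕ) (ε : ℝ) (i j : ℕ) : ℝ :=
  if i = 1 then 1 - ε
  else if i = j then 1
  else if i = j + 1 ∧ j < m then (m : ℝ) + 1 - j - ((m : ℝ) + 2 - j) * ε
  else m + 2

theorem lowerBoundTimes_nonneg {m : ℕ} {ε : ℝ} (hε : ε < 1 / 2) (i j : ℕ) :
    0 ≤ lowerBoundTimes m ε i j := by
  unfold lowerBoundTimes
  split_ifs with hi1 hij hsucc
  · linarith
  · exact zero_le_one
  · have hjm : (j : ℝ) + 1 ≤ m := by norm_cast; grind
    nlinarith [mul_le_mul_of_nonneg_left hε.le (by linarith : (0 : ℝ) ≤ m + 2 - j)]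
  · positivity

theorem isSMLowerBoundInstance_lowerBoundTimes {m : ℕ} {ε : ℝ} (hm : 2 ≤ m) (hε0 : 0 < ε)
    (hε : ε < 1 / 2) : IsSMLowerBoundInstance m ε (m + 2) (lowerBoundTimes m ε) where
  two_le := hm
  ε_pos := hε0
  ε_lt_half := hε
  le_B := le_rfl
  time_one _ _ := if_pos rfl
  time_self j hj := by simp [lowerBoundTimes, show j ≠ 1 by grind]
  time_succ j hj := by simp [lowerBoundTimes, show j ≠ 0 by grind, show j < m by grind]
  time_other i _ j _ hi1 hij hsucc := by simp [lowerBoundTimes, hi1, hij, hsucc]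

theorem exists_smEqN_makespanN_gt {m : ℕ} (hm : 2 ≤ m) {c : ℝ} (hc : c < m) :
    ∃ (n' : ℕ) (q : ℕ → ℕ → ℝ) (μ' σ' : ℕ → ℕ),
      (∀ i j, 0 ≤ q i j) ∧ MinSelN m n' q μ' ∧ SMEqN m n' q μ' σ' ∧
        c * OPTN m n' q < makespanN m n' q σ' := by
  set c' := max c 0
  have hm' : (2 : ℝ) ≤ m := by exact_mod_cast hm
  have hc' : c' < m := max_lt hc (by linarith)
  set ε := (m - c') / (2 * (m + 1))
  have hε0 : 0 < ε := by positivity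
  have hε : ε < 1 / 2 := by
    rw [div_lt_iff₀ (by positivity)]; linarith [le_max_right c 0]
  have hmakespan : (m : ℝ) - (m + 1) * ε = (m + c') / 2 := by
    simp only [ε]; field_simp; ring
  have h := isSMLowerBoundInstance_lowerBoundTimes hm hε0 hε
  refine ⟨m, lowerBoundTimes m ε, fun _ => 1, shiftSchedule m,
    lowerBoundTimes_nonneg hε, h.minSelN_one, (h.smEqN_iff h.minSelN_one).2 fun _ _ => rfl, ?_⟩
  rw [h.makespanN_shiftSchedule, hmakespan]
  have hopt := optN_nonneg (n := m) h.nonneg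
  calc c * OPTN m m (lowerBoundTimes m ε)
      ≤ c' * OPTN m m (lowerBoundTimes m ε) := mul_le_mul_of_nonneg_right (le_max_left c 0) hopt
    _ ≤ c' := mul_le_of_le_one_right (le_max_right c 0) h.optN_le_one
    _ < (m + c') / 2 := by linarith

/-- Let `m ≥ 2`, `n = m`, `0 < ε < 1/2` and `B ≥ m + 2`, and consider
the instance with `p 1 j = 1 − ε` for all jobs `j`, `p j j = 1` for `j ∈ {2, …, m}`,
`p (j+1) j = m + 1 − j − (m + 2 − j)ε` for `j ∈ {1, …, m−1}`, and `p i j = B` for all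
remaining pairs.  Every simple-minded equilibrium `σ` sends job `j` to machine `j + 1`
for `j ∈ {1, …, m−1}` and job `m` to machine `1`, and has makespan `m − (m+1)ε`, while
the schedule assigning each job `j` to machine `j` shows `OPT ≤ 1`.  Consequently, for
every `c < m` there is an instance on `m` machines with a simple-minded equilibrium of
makespan greater than `c · OPT`: the sequential price of anarchy for simple-minded
players is at least `m`. -/
theorem spoa_simpleMinded_ge (m : ℕ) (hm : 2 ≤ m) (ε B : ℝ)
    (hε0 : 0 < ε) (hε : ε < 1 / 2) (hB : (m : ℝ) + 2 ≤ B)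
    (p : ℕ → ℕ → ℝ)
    (hp1 : ∀ j ∈ Finset.Icc 1 m, p 1 j = 1 - ε)
    (hp2 : ∀ j ∈ Finset.Icc 2 m, p j j = 1)
    (hp3 : ∀ j ∈ Finset.Icc 1 (m - 1),
      p (j + 1) j = (m : ℝ) + 1 - j - ((m : ℝ) + 2 - j) * ε)
    (hp4 : ∀ i ∈ Finset.Icc 1 m, ∀ j ∈ Finset.Icc 1 m,
      i ≠ 1 → i ≠ j → i ≠ j + 1 → p i j = B)
    (μ σ : ℕ → ℕ) (hμ : MinSelN m m p μ) (hσ : SMEqN m m p μ σ) :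
    (∀ j ∈ Finset.Icc 1 (m - 1), σ j = j + 1) ∧ σ m = 1 ∧
    makespanN m m p σ = (m : ℝ) - ((m : ℝ) + 1) * ε ∧
    OPTN m m p ≤ 1 ∧
    (∀ c : ℝ, c < (m : ℝ) →
      ∃ (n' : ℕ) (q : ℕ → ℕ → ℝ) (μ' σ' : ℕ → ℕ),
        (∀ i j, 0 ≤ q i j) ∧ MinSelN m n' q μ' ∧ SMEqN m n' q μ' σ' ∧
        c * OPTN m n' q < makespanN m n' q σ') := by
  have h : IsSMLowerBoundInstance m ε B p := ⟨hm, hε0, hε, hB, hp1, hp2, hp3, hp4⟩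
  have hσ_eq := (h.smEqN_iff hμ).1 hσ
  refine ⟨fun j hj => ?_, ?_, ?_, h.optN_le_one, fun _ hc => exists_smEqN_makespanN_gt hm hc⟩
  · rw [hσ_eq j (by grind), shiftSchedule, if_neg (by grind)]
  · rw [hσ_eq m (by grind), shiftSchedule, if_pos rfl]
  · rw [makespanN_congr hσ_eq, h.makespanN_shiftSchedule]
end

section
/- Let D₁, D₂ ≥ 0 be real numbers, let s < s' be integers, and let a_j, b_j ≥ 0 for j ∈ {s+1,…,s'} be real numbers. Assume: (i) D₁ + a_{s+1} ≤ D₂ + b_{s+1}; and (ii) for every n' with s+1 ≤ n' ≤ s'−1, both D₁ + a_{n'} + a_{n'+1} ≤ D₂ + Σ_{j=s+1}^{n'−1} b_j + b_{n'+1} and D₂ + Σ_{j=s+1}^{n'} b_j ≤ D₁ + a_{n'} + a_{n'+1}. Then max(D₁ + a_{s'}, D₂ + Σ_{j=s+1}^{s'−1} b_j) ≤ max(D₁, D₂) + Σ_{j=s+1}^{s'} min(a_j, b_j). -/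
/-!
Let `L n` (`switchMakespan`) be the makespan when jobs `s+1, …, n-1` run on machine 2 and job
`n` on machine 1. By (i), `L (s+1) ≤ max D₁ D₂ + min (a (s+1)) (b (s+1))`, and (ii) at `n` gives
`L (n+1) ≤ L n + min (a (n+1)) (b (n+1))`: both loads of `L (n+1)` are bounded by
`D₁ + a n + a (n+1)`, which (ii) in turn bounds by `D₂ + ∑_{j<n} b j + b (n+1)`.
Telescoping these increments from `s+1` to `s'` gives the claim.
-/

open Finset

theorem le_add_sum_Ioc_of_le_add {M : Type*} [AddCommMonoid M] [PartialOrder M]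
    [IsOrderedAddMonoid M] {f g : ℤ → M} {m k : ℤ}
    (hfg : ∀ n, m ≤ n → n < k → f (n + 1) ≤ f n + g (n + 1)) (hmk : m ≤ k) :
    f k ≤ f m + ∑ n ∈ Ioc m k, g n := by
  induction k, hmk using Int.leInduction with
  | base => simp
  | succ k hmk ih =>
    rw [← insert_Ioc_right_eq_Ioc_add_one hmk, sum_insert (by simp)]
    calc f (k + 1) ≤ f k + g (k + 1) := hfg k hmk (lt_add_one k)
      _ ≤ f m + ∑ n ∈ Ioc m k, g n + g (k + 1) := by
        gcongr
        exact ih fun n hmn hnk => hfg n hmn (hnk.trans (lt_add_one k))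
      _ = f m + (g (k + 1) + ∑ n ∈ Ioc m k, g n) := by abel

noncomputable def switchMakespan (D₁ D₂ : ℝ) (s : ℤ) (a b : ℤ → ℝ) (n : ℤ) : ℝ :=
  max (D₁ + a n) (D₂ + ∑ j ∈ Icc (s + 1) (n - 1), b j)

section

variable {D₁ D₂ : ℝ} {s : ℤ} {a b : ℤ → ℝ}

theorem switchMakespan_first_le (ha : 0 ≤ a (s + 1)) (hb : 0 ≤ b (s + 1))
    (h1 : D₁ + a (s + 1) ≤ D₂ + b (s + 1)) :
    switchMakespan D₁ D₂ s a b (s + 1) ≤ max D₁ D₂ + min (a (s + 1)) (b (s + 1)) := by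
  have hD₁ := le_max_left D₁ D₂
  have hD₂ := le_max_right D₁ D₂
  rw [switchMakespan, add_sub_cancel_right, Icc_eq_empty (by simp), sum_empty, add_zero,
    ← min_add_add_left]
  exact max_le (le_min (by linarith) (by linarith)) (le_min (by linarith) (by linarith))

theorem switchMakespan_add_one_le {n : ℤ} (ha : 0 ≤ a n)
    (hA : D₁ + a n + a (n + 1) ≤ D₂ + (∑ j ∈ Icc (s + 1) (n - 1), b j) + b (n + 1))
    (hB : D₂ + (∑ j ∈ Icc (s + 1) n, b j) ≤ D₁ + a n + a (n + 1)) :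
    switchMakespan D₁ D₂ s a b (n + 1) ≤
      switchMakespan D₁ D₂ s a b n + min (a (n + 1)) (b (n + 1)) := by
  have h₁ : D₁ + a n ≤ switchMakespan D₁ D₂ s a b n := le_max_left _ _
  have h₂ : D₂ + ∑ j ∈ Icc (s + 1) (n - 1), b j ≤ switchMakespan D₁ D₂ s a b n :=
    le_max_right _ _
  rw [switchMakespan, add_sub_cancel_right, ← min_add_add_left]
  exact max_le (le_min (by linarith) (by linarith)) (le_min (by linarith) (by linarith))

end

theorem claim_induction_step_general (D₁ D₂ : ℝ)
    (s s' : ℤ) (hss : s < s') (a b : ℤ → ℝ)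
    (ha : ∀ j ∈ Finset.Icc (s + 1) s', 0 ≤ a j)
    (hb : ∀ j ∈ Finset.Icc (s + 1) s', 0 ≤ b j)
    (h1 : D₁ + a (s + 1) ≤ D₂ + b (s + 1))
    (h2 : ∀ n', s + 1 ≤ n' → n' ≤ s' - 1 →
      D₁ + a n' + a (n' + 1) ≤
          D₂ + (∑ j ∈ Finset.Icc (s + 1) (n' - 1), b j) + b (n' + 1) ∧
        D₂ + (∑ j ∈ Finset.Icc (s + 1) n', b j) ≤ D₁ + a n' + a (n' + 1)) :
    max (D₁ + a s') (D₂ + ∑ j ∈ Finset.Icc (s + 1) (s' - 1), b j) ≤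
      max D₁ D₂ + ∑ j ∈ Finset.Icc (s + 1) s', min (a j) (b j) := by
  have hfirst : s + 1 ∈ Icc (s + 1) s' := left_mem_Icc.2 hss
  have hstep : ∀ n, s + 1 ≤ n → n < s' → switchMakespan D₁ D₂ s a b (n + 1) ≤
      switchMakespan D₁ D₂ s a b n + min (a (n + 1)) (b (n + 1)) := fun n hsn hns =>
    have hn := h2 n hsn (Int.le_sub_one_of_lt hns)
    switchMakespan_add_one_le (ha n (mem_Icc.2 ⟨hsn, hns.le⟩)) hn.1 hn.2
  calc switchMakespan D₁ D₂ s a b s'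
      ≤ switchMakespan D₁ D₂ s a b (s + 1) + ∑ j ∈ Ioc (s + 1) s', min (a j) (b j) :=
        le_add_sum_Ioc_of_le_add hstep hss
    _ ≤ max D₁ D₂ + min (a (s + 1)) (b (s + 1)) + ∑ j ∈ Ioc (s + 1) s', min (a j) (b j) := by
        gcongr
        exact switchMakespan_first_le (ha _ hfirst) (hb _ hfirst) h1
    _ = max D₁ D₂ + ∑ j ∈ Icc (s + 1) s', min (a j) (b j) := by
        rw [Icc_eq_cons_Ioc hss, sum_cons, add_assoc]

/-- the induction step, Claim 1, in the proof that 1-lookahead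
equilibria on two unrelated machines have makespan at most the total minimum
processing time.  `D₁, D₂ ≥ 0` are the current loads of machines 1 and 2, and for
`j ∈ {s+1, …, s'}`, `a j ≥ 0` and `b j ≥ 0` are the processing times of job `j` on
machines 1 and 2.  Hypotheses (i) and (ii) encode the 1-lookahead equilibrium behavior
of jobs `s+1, …, s'` (jobs `s+1, …, s'−1` choose machine 2 and job `s'` chooses
machine 1).  The conclusion bounds the increase of the maximum load by the total
minimum processing time of the jobs involved. -/
theorem claim_induction_step (D₁ D₂ : ℝ) (hD₁ : 0 ≤ D₁) (hD₂ : 0 ≤ D₂)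
    (s s' : ℤ) (hss : s < s') (a b : ℤ → ℝ)
    (ha : ∀ j ∈ Finset.Icc (s + 1) s', 0 ≤ a j)
    (hb : ∀ j ∈ Finset.Icc (s + 1) s', 0 ≤ b j)
    (h1 : D₁ + a (s + 1) ≤ D₂ + b (s + 1))
    (h2 : ∀ n', s + 1 ≤ n' → n' ≤ s' - 1 →
      D₁ + a n' + a (n' + 1) ≤
          D₂ + (∑ j ∈ Finset.Icc (s + 1) (n' - 1), b j) + b (n' + 1) ∧
        D₂ + (∑ j ∈ Finset.Icc (s + 1) n', b j) ≤ D₁ + a n' + a (n' + 1)) :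
    max (D₁ + a s') (D₂ + ∑ j ∈ Finset.Icc (s + 1) (s' - 1), b j) ≤
      max D₁ D₂ + ∑ j ∈ Finset.Icc (s + 1) s', min (a j) (b j) :=
  claim_induction_step_general D₁ D₂ s s' hss a b ha hb h1 h2
end

section
/- Let D₁, D₂ ≥ 0 be real numbers, let s be an integer, let a_j, b_j ≥ 0 be real numbers, and let n' ≥ s+1 be an integer. Define Φ(t) := max(D₁ + a_{t+1}, D₂ + Σ_{j=s+1}^{t} b_j). If D₁ + a_{n'} + a_{n'+1} ≤ D₂ + Σ_{j=s+1}^{n'−1} b_j + b_{n'+1} and D₂ + Σ_{j=s+1}^{n'} b_j ≤ D₁ + a_{n'} + a_{n'+1}, then Φ(n') ≤ max(D₁ + a_{n'}, D₂ + Σ_{j=s+1}^{n'−1} b_j) + min(a_{n'+1}, b_{n'+1}), i.e., Φ(n') ≤ Φ(n'−1) + min(a_{n'+1}, b_{n'+1}). -/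
/-! Both terms of the left-hand maximum are bounded by chaining the hypotheses: if
`a (n'+1) ≤ b (n'+1)`, go through `D₁ + a n'` using `h2`; otherwise continue with `h1` to
`D₂ + Σ_{j=s+1}^{n'-1} b j`. -/

theorem max_le_max_add_min_of_le_of_le {M : Type*} [AddCommMonoid M] [LinearOrder M]
    [IsOrderedAddMonoid M] {u y z α α' β' : M} (hα : 0 ≤ α)
    (h1 : u + α + α' ≤ y + β') (h2 : z ≤ u + α + α') :
    max (u + α') z ≤ max (u + α) y + min α' β' := by
  have hu : u + α' ≤ u + α + α' := add_le_add_left (le_add_of_nonneg_right hα) α'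
  rcases le_total α' β' with h | h
  · rw [min_eq_left h]
    have hmax : u + α + α' ≤ max (u + α) y + α' := add_le_add_left (le_max_left _ _) α'
    exact max_le (hu.trans hmax) (h2.trans hmax)
  · rw [min_eq_right h]
    have hmax : y + β' ≤ max (u + α) y + β' := add_le_add_left (le_max_right _ _) β'
    exact max_le ((hu.trans h1).trans hmax) ((h2.trans h1).trans hmax)

theorem phi_step_general (D₁ D₂ : ℝ)
    (s : ℤ) (a b : ℤ → ℝ) (ha : ∀ j, 0 ≤ a j)
    (n' : ℤ)
    (h1 : D₁ + a n' + a (n' + 1) ≤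
      D₂ + (∑ j ∈ Finset.Icc (s + 1) (n' - 1), b j) + b (n' + 1))
    (h2 : D₂ + (∑ j ∈ Finset.Icc (s + 1) n', b j) ≤ D₁ + a n' + a (n' + 1)) :
    max (D₁ + a (n' + 1)) (D₂ + ∑ j ∈ Finset.Icc (s + 1) n', b j) ≤
      max (D₁ + a n') (D₂ + ∑ j ∈ Finset.Icc (s + 1) (n' - 1), b j) +
        min (a (n' + 1)) (b (n' + 1)) :=
  max_le_max_add_min_of_le_of_le (ha n') h1 h2

/-- a key inequality in the proof that 1-lookahead equilibria on two
unrelated machines have makespan at most the total minimum processing time.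
`D₁, D₂ ≥ 0` are the current loads of machines 1 and 2, and `a j`, `b j ≥ 0` are the
processing times of job `j` on machines 1 and 2.  With
`Φ(t) := max (D₁ + a (t+1), D₂ + Σ_{j=s+1}^t b j)`, the two hypotheses encode that job
`n'` chooses machine 2 in a 1-lookahead equilibrium, believing that job `n'+1` would
choose machine 1 after it; the conclusion is `Φ(n') ≤ Φ(n'−1) + min (a (n'+1)) (b (n'+1))`. -/
theorem phi_step (D₁ D₂ : ℝ) (hD₁ : 0 ≤ D₁) (hD₂ : 0 ≤ D₂)
    (s : ℤ) (a b : ℤ → ℝ) (ha : ∀ j, 0 ≤ a j) (hb : ∀ j, 0 ≤ b j)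
    (n' : ℤ) (hn' : s + 1 ≤ n')
    (h1 : D₁ + a n' + a (n' + 1) ≤
      D₂ + (∑ j ∈ Finset.Icc (s + 1) (n' - 1), b j) + b (n' + 1))
    (h2 : D₂ + (∑ j ∈ Finset.Icc (s + 1) n', b j) ≤ D₁ + a n' + a (n' + 1)) :
    max (D₁ + a (n' + 1)) (D₂ + ∑ j ∈ Finset.Icc (s + 1) n', b j) ≤
      max (D₁ + a n') (D₂ + ∑ j ∈ Finset.Icc (s + 1) (n' - 1), b j) +
        min (a (n' + 1)) (b (n' + 1)) :=
  phi_step_general D₁ D₂ s a b ha n' h1 h2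
end
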